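/- arXiv:2401.12622 — 4 statements merged into one kernel-verified Lean document; each statement's English description precedes it below -/
import Mathlib

section
/- Define φ̃(θ,φ,r; k_y,k_z) = k_z sinθ + k_y sinφ cosθ − (k_y² + k_z²)/(2r). Suppose angles θ_{k_i}, φ_{k_i} and ranges r_{k_i} > 0 (i = 0,…,2p) are such that s₁ := ∑_i (−1)^i sinθ_{k_i} ∈ [−1,1], and setting θ* = arcsin(s₁), s₂ := (1/cosθ*) ∑_i (−1)^i sinφ_{k_i} cosθ_{k_i} ∈ [−1,1], φ* = arcsin(s₂), and ρ := ∑_i (−1)^i / r_{k_i} > 0 with r* = 1/ρ. Then for all k_y, k_z: ∑_{i=0}^{2p} (−1)^i φ̃(θ_{k_i}, φ_{k_i}, r_{k_i}; k_y, k_z) = φ̃(θ*, φ*, r*; k_y, k_z). -/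
open Real

/-- Fresnel phase of a point `(θ, φ, r)` observed at array element coordinates `(k_y, k_z)`. -/
noncomputable def fresnelPhase (θ φ r ky kz : ℝ) : ℝ :=
  kz * Real.sin θ + ky * Real.sin φ * Real.cos θ - (ky ^ 2 + kz ^ 2) / (2 * r)

/-!
The Fresnel phase depends on the point `(θ, φ, r)` only through the three quantities
`sin θ`, `sin φ cos θ` and `1 / r`, and it is linear in them. Hence a signed sum of phases is
the phase of any point whose three quantities are the corresponding signed sums, and
`arcsin` and inversion produce such a point.
-/

lemma fresnelPhase_eq_linear (θ φ r ky kz : ℝ) :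
    fresnelPhase θ φ r ky kz =
      kz * sin θ + ky * (sin φ * cos θ) - (ky ^ 2 + kz ^ 2) / 2 * r⁻¹ := by
  rw [fresnelPhase, div_mul_eq_div_div, div_eq_mul_inv _ r]
  ring

lemma sum_mul_fresnelPhase {ι : Type*} (s : Finset ι) (c θ φ r : ι → ℝ) (ky kz : ℝ) :
    ∑ i ∈ s, c i * fresnelPhase (θ i) (φ i) (r i) ky kz =
      kz * ∑ i ∈ s, c i * sin (θ i) + ky * ∑ i ∈ s, c i * sin (φ i) * cos (θ i)
        - (ky ^ 2 + kz ^ 2) / 2 * ∑ i ∈ s, c i / r i := by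
  simp only [fresnelPhase_eq_linear, Finset.mul_sum, ← Finset.sum_add_distrib,
    ← Finset.sum_sub_distrib]
  refine Finset.sum_congr rfl fun i _ => ?_
  rw [div_eq_mul_inv]
  ring

theorem distortion_focal_point_general (p : ℕ) (θ φ r : Fin (2 * p + 1) → ℝ)
    (hs1 : |∑ i : Fin (2 * p + 1), (-1 : ℝ) ^ (i : ℕ) * Real.sin (θ i)| ≤ 1)
    (θs : ℝ) (hθs : θs = Real.arcsin (∑ i : Fin (2 * p + 1), (-1 : ℝ) ^ (i : ℕ) * Real.sin (θ i)))
    (hs2 : |(∑ i : Fin (2 * p + 1), (-1 : ℝ) ^ (i : ℕ) * Real.sin (φ i) * Real.cos (θ i)) / Real.cos θs| ≤ 1)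
    (hcos : Real.cos θs ≠ 0)
    (φs : ℝ)
    (hφs : φs = Real.arcsin
      ((∑ i : Fin (2 * p + 1), (-1 : ℝ) ^ (i : ℕ) * Real.sin (φ i) * Real.cos (θ i)) / Real.cos θs))
    (rs : ℝ) (hrs : rs = (∑ i : Fin (2 * p + 1), (-1 : ℝ) ^ (i : ℕ) / r i)⁻¹) :
    ∀ ky kz : ℝ,
      ∑ i : Fin (2 * p + 1), (-1 : ℝ) ^ (i : ℕ) * fresnelPhase (θ i) (φ i) (r i) ky kz =
        fresnelPhase θs φs rs ky kz := by
  intro ky kz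
  subst hφs hrs
  rw [sum_mul_fresnelPhase, fresnelPhase_eq_linear, sin_arcsin' (abs_le.mp hs2),
    div_mul_cancel₀ _ hcos, hθs, sin_arcsin' (abs_le.mp hs1), inv_inv]

/-- Theorem 1 (core identity): the alternating sum of the Fresnel phases of `2p+1` user
locations equals the Fresnel phase of a single effective focal point `(θ*, φ*, r*)` whose
elevation, azimuth and range are given by the arcsin/harmonic formulas. -/
theorem distortion_focal_point (p : ℕ) (θ φ r : Fin (2 * p + 1) → ℝ)
    (hr : ∀ i, 0 < r i)
    (hs1 : |∑ i : Fin (2 * p + 1), (-1 : ℝ) ^ (i : ℕ) * Real.sin (θ i)| ≤ 1)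
    (θs : ℝ) (hθs : θs = Real.arcsin (∑ i : Fin (2 * p + 1), (-1 : ℝ) ^ (i : ℕ) * Real.sin (θ i)))
    (hs2 : |(∑ i : Fin (2 * p + 1), (-1 : ℝ) ^ (i : ℕ) * Real.sin (φ i) * Real.cos (θ i)) / Real.cos θs| ≤ 1)
    (hcos : Real.cos θs ≠ 0)
    (φs : ℝ)
    (hφs : φs = Real.arcsin
      ((∑ i : Fin (2 * p + 1), (-1 : ℝ) ^ (i : ℕ) * Real.sin (φ i) * Real.cos (θ i)) / Real.cos θs))
    (hρ : 0 < ∑ i : Fin (2 * p + 1), (-1 : ℝ) ^ (i : ℕ) / r i)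
    (rs : ℝ) (hrs : rs = (∑ i : Fin (2 * p + 1), (-1 : ℝ) ^ (i : ℕ) / r i)⁻¹) :
    ∀ ky kz : ℝ,
      ∑ i : Fin (2 * p + 1), (-1 : ℝ) ^ (i : ℕ) * fresnelPhase (θ i) (φ i) (r i) ky kz =
        fresnelPhase θs φs rs ky kz :=
  distortion_focal_point_general p θ φ r hs1 θs hθs hs2 hcos φs hφs rs hrs
end

section
/- With φ̃ as above and p = 1 (third-order distortion), if all users share elevation θ_k = θ₀, then the effective elevation of any distortion term (p,q,v) equals θ₀ and its azimuth is arcsin(sinφ_p − sinφ_q + sinφ_v) whenever this argument lies in [−1,1]. -/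
open Real

/-- Corollary 3 (same-elevation case, third-order distortion): if all users share the
elevation `θ₀`, the effective elevation of any distortion term `(p,q,v)` equals `θ₀` and
its azimuth is `arcsin(sin φ_p − sin φ_q + sin φ_v)`. -/
theorem same_elevation_distortion (θ₀ φp φq φv rp rq rv : ℝ)
    (hθ₀ : θ₀ ∈ Set.Icc (-(π / 2)) (π / 2))
    (harg : |Real.sin φp - Real.sin φq + Real.sin φv| ≤ 1)
    (hrp : 0 < rp) (hrq : 0 < rq) (hrv : 0 < rv)
    (hρ : 0 < 1 / rp - 1 / rq + 1 / rv)
    (φs : ℝ) (hφs : φs = Real.arcsin (Real.sin φp - Real.sin φq + Real.sin φv))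
    (rs : ℝ) (hrs : rs = (1 / rp - 1 / rq + 1 / rv)⁻¹) :
    ∀ ky kz : ℝ,
      fresnelPhase θ₀ φp rp ky kz - fresnelPhase θ₀ φq rq ky kz
          + fresnelPhase θ₀ φv rv ky kz =
        fresnelPhase θ₀ φs rs ky kz := by
  intro ky kz
  have hsin : Real.sin φs = Real.sin φp - Real.sin φq + Real.sin φv := by
    rw [hφs, Real.sin_arcsin (by linarith [abs_le.mp harg]) (abs_le.mp harg).2]
  have hr : 1 / rs = 1 / rp - 1 / rq + 1 / rv := by
    rw [hrs, one_div, inv_inv]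
  simp only [fresnelPhase, hsin]
  have hp : (ky ^ 2 + kz ^ 2) / (2 * rp) = (ky ^ 2 + kz ^ 2) / 2 * (1 / rp) := by ring
  have hq : (ky ^ 2 + kz ^ 2) / (2 * rq) = (ky ^ 2 + kz ^ 2) / 2 * (1 / rq) := by ring
  have hv : (ky ^ 2 + kz ^ 2) / (2 * rv) = (ky ^ 2 + kz ^ 2) / 2 * (1 / rv) := by ring
  have hs : (ky ^ 2 + kz ^ 2) / (2 * rs) = (ky ^ 2 + kz ^ 2) / 2 * (1 / rs) := by ring
  rw [hp, hq, hv, hs, hr]; ring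
end

section
/- With φ̃ as above and p = 1, if all users share azimuth φ_k = φ₀, then the effective elevation is θ* = arcsin(sinθ_p − sinθ_q + sinθ_v) and the effective azimuth satisfies sinφ* = (sinφ₀/cosθ*)(cosθ_p − cosθ_q + cosθ_v), whenever the arcsin arguments lie in [−1,1] and cosθ* ≠ 0. In particular, if φ₀ = 0 then φ* = 0. -/
/-!
The Fresnel phase is linear in the three coordinates `sin θ`, `sin φ cos θ` and `1 / r`, so an
alternating sum of phases is again a phase as soon as a point `(θ*, φ*, r*)` realises the
alternating sums of these coordinates. With a common azimuth `φ₀` the middle coordinate factors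
as `sin φ₀ (cos θ_p − cos θ_q + cos θ_v)`, and the arcsin hypotheses make `θ*` and `φ*` realise
the first two coordinates.
-/

open Real

lemma fresnelPhase_sub_add_fresnelPhase {θ₁ φ₁ r₁ θ₂ φ₂ r₂ θ₃ φ₃ r₃ θ φ r : ℝ}
    (hθ : sin θ = sin θ₁ - sin θ₂ + sin θ₃)
    (hφ : sin φ * cos θ = sin φ₁ * cos θ₁ - sin φ₂ * cos θ₂ + sin φ₃ * cos θ₃)
    (hr : r⁻¹ = r₁⁻¹ - r₂⁻¹ + r₃⁻¹) (ky kz : ℝ) :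
    fresnelPhase θ₁ φ₁ r₁ ky kz - fresnelPhase θ₂ φ₂ r₂ ky kz + fresnelPhase θ₃ φ₃ r₃ ky kz =
      fresnelPhase θ φ r ky kz := by
  simp only [fresnelPhase_eq_linear, hθ, hφ, hr]
  ring

theorem same_azimuth_distortion_general (φ₀ θp θq θv rp rq rv : ℝ)
    (harg1 : |Real.sin θp - Real.sin θq + Real.sin θv| ≤ 1)
    (θs : ℝ) (hθs : θs = Real.arcsin (Real.sin θp - Real.sin θq + Real.sin θv))
    (hcos : Real.cos θs ≠ 0)
    (harg2 : |Real.sin φ₀ * (Real.cos θp - Real.cos θq + Real.cos θv) / Real.cos θs| ≤ 1)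
    (φs : ℝ)
    (hφs : φs = Real.arcsin
      (Real.sin φ₀ * (Real.cos θp - Real.cos θq + Real.cos θv) / Real.cos θs))
    (rs : ℝ) (hrs : rs = (1 / rp - 1 / rq + 1 / rv)⁻¹) :
    (∀ ky kz : ℝ,
      fresnelPhase θp φ₀ rp ky kz - fresnelPhase θq φ₀ rq ky kz
          + fresnelPhase θv φ₀ rv ky kz =
        fresnelPhase θs φs rs ky kz) ∧
      (φ₀ = 0 → φs = 0) := by
  refine ⟨fresnelPhase_sub_add_fresnelPhase ?_ ?_ ?_, fun h₀ => ?_⟩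
  · rw [hθs, sin_arcsin' (abs_le.mp harg1)]
  · rw [hφs, sin_arcsin' (abs_le.mp harg2), div_mul_cancel₀ _ hcos]
    ring
  · rw [hrs, inv_inv]
    simp only [one_div]
  · rw [hφs, h₀, sin_zero, zero_mul, zero_div, arcsin_zero]

/-- Corollary 4 (same-azimuth case, third-order distortion): if all users share the azimuth
`φ₀`, the effective elevation is `arcsin(sin θ_p − sin θ_q + sin θ_v)` and the effective
azimuth satisfies `sin φ* = (sin φ₀ / cos θ*)(cos θ_p − cos θ_q + cos θ_v)`;
if `φ₀ = 0` then `φ* = 0`. -/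
theorem same_azimuth_distortion (φ₀ θp θq θv rp rq rv : ℝ)
    (hrp : 0 < rp) (hrq : 0 < rq) (hrv : 0 < rv)
    (harg1 : |Real.sin θp - Real.sin θq + Real.sin θv| ≤ 1)
    (θs : ℝ) (hθs : θs = Real.arcsin (Real.sin θp - Real.sin θq + Real.sin θv))
    (hcos : Real.cos θs ≠ 0)
    (harg2 : |Real.sin φ₀ * (Real.cos θp - Real.cos θq + Real.cos θv) / Real.cos θs| ≤ 1)
    (φs : ℝ)
    (hφs : φs = Real.arcsin
      (Real.sin φ₀ * (Real.cos θp - Real.cos θq + Real.cos θv) / Real.cos θs))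
    (hρ : 0 < 1 / rp - 1 / rq + 1 / rv)
    (rs : ℝ) (hrs : rs = (1 / rp - 1 / rq + 1 / rv)⁻¹) :
    (∀ ky kz : ℝ,
      fresnelPhase θp φ₀ rp ky kz - fresnelPhase θq φ₀ rq ky kz
          + fresnelPhase θv φ₀ rv ky kz =
        fresnelPhase θs φs rs ky kz) ∧
      (φ₀ = 0 → φs = 0) :=
  same_azimuth_distortion_general φ₀ θp θq θv rp rq rv harg1 θs hθs hcos harg2 φs hφs rs hrs
end

section
/- For a function ψ: Fin K → ℝ³, the image of the map (p,q,v) ↦ ψ(p) − ψ(q) + ψ(v) over (Fin K)³ has cardinality at most (K³ − K² + 2K)/2. -/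
/-!
The value `ψ p - ψ q + ψ v` is unchanged by swapping `p` and `v`, and for `q = p` (resp.
`q = v`) it equals `ψ v - ψ v + ψ v` (resp. `ψ p - ψ p + ψ p`), a value with equal outer
indices. So every value is taken either on one of the `K²` triples with `p = v`, or on the
`K(K-1)(K-2)` triples of pairwise distinct indices, where the swap pairs the triples off and
each value is taken at least twice.
-/

open Finset

theorem Finset.two_mul_card_image_le_of_fixedPointFree {α β : Type*} [DecidableEq β]
    {s : Finset α} {f : α → β} (σ : α → α) (hσs : ∀ x ∈ s, σ x ∈ s)
    (hσ : ∀ x ∈ s, σ x ≠ x) (hf : ∀ x ∈ s, f (σ x) = f x) :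
    2 * #(s.image f) ≤ #s := by
  refine mul_card_image_le_card s 2 fun b hb => ?_
  obtain ⟨x, hx, rfl⟩ := mem_image.mp hb
  exact one_lt_card.mpr ⟨x, by simp [hx], σ x, by simp [hσs x hx, hf x hx], (hσ x hx).symm⟩

theorem Nat.mul_self_sub_mul_sub_two_add_two_mul_mul_self (K : ℕ) :
    (K * K - K) * (K - 2) + 2 * (K * K) = K ^ 3 - K ^ 2 + 2 * K := by
  obtain _ | _ | n := K
  · rfl
  · rfl
  · have h1 : (n + 2) * (n + 2) - (n + 2) = (n + 2) * (n + 1) := Nat.sub_eq_of_eq_add (by ring)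
    have h2 : (n + 2) ^ 3 - (n + 2) ^ 2 = (n + 2) ^ 2 * (n + 1) := Nat.sub_eq_of_eq_add (by ring)
    rw [h1, h2, show n + 1 + 1 - 2 = n by omega]
    ring

section

variable {ι G : Type*} [Fintype ι] [DecidableEq ι] [AddCommGroup G]

def intermod (ψ : ι → G) (t : ι × ι × ι) : G := ψ t.1 - ψ t.2.1 + ψ t.2.2

variable (ι) in
def distinctTriples : Finset (ι × ι × ι) :=
  {t | t.1 ≠ t.2.2 ∧ t.2.1 ≠ t.1 ∧ t.2.1 ≠ t.2.2}

theorem card_distinctTriples : #(distinctTriples ι) =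
    (Fintype.card ι * Fintype.card ι - Fintype.card ι) * (Fintype.card ι - 2) := by
  have hmaps : ∀ t ∈ distinctTriples ι, (t.1, t.2.2) ∈ (univ : Finset ι).offDiag := by
    intro t ht
    simp_all [distinctTriples]
  rw [card_eq_sum_card_fiberwise hmaps, ← card_univ, ← offDiag_card]
  refine sum_const_nat fun pv hpv => ?_
  have hfiber : {t ∈ distinctTriples ι | (t.1, t.2.2) = pv} =
      (univ \ {pv.1, pv.2}).image fun q => (pv.1, q, pv.2) := by
    ext ⟨p, q, v⟩
    obtain ⟨p', v'⟩ := pv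
    simp only [distinctTriples, mem_filter, mem_univ, true_and, mem_image, mem_sdiff, mem_insert,
      mem_singleton, not_or, Prod.mk.injEq]
    constructor
    · rintro ⟨⟨-, hqp, hqv⟩, rfl, rfl⟩
      exact ⟨q, ⟨hqp, hqv⟩, rfl, rfl, rfl⟩
    · rintro ⟨q, ⟨hqp, hqv⟩, rfl, rfl, rfl⟩
      exact ⟨⟨(mem_offDiag.mp hpv).2.2, hqp, hqv⟩, rfl, rfl⟩
  rw [hfiber, card_image_of_injective _ fun _ _ h => by simpa using h,
    card_sdiff_of_subset (subset_univ _), card_pair (mem_offDiag.mp hpv).2.2]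

theorem image_intermod_subset [DecidableEq G] (ψ : ι → G) :
    univ.image (intermod ψ) ⊆
      (univ : Finset (ι × ι)).image (fun x => intermod ψ (x.1, x.2, x.1)) ∪
        (distinctTriples ι).image (intermod ψ) := by
  intro x hx
  obtain ⟨⟨p, q, v⟩, -, rfl⟩ := mem_image.mp hx
  simp only [mem_union, mem_image, mem_univ, true_and, Prod.exists]
  by_cases hpv : p = v
  · exact Or.inl ⟨p, q, by rw [hpv]⟩
  by_cases hqp : q = p
  · exact Or.inl ⟨v, v, by simp [intermod, hqp]⟩
  by_cases hqv : q = v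
  · exact Or.inl ⟨p, p, by simp [intermod, hqv]⟩
  exact Or.inr ⟨p, q, v, by simp [distinctTriples, hpv, hqp, hqv]⟩

theorem two_mul_card_image_intermod_distinctTriples_le [DecidableEq G] (ψ : ι → G) :
    2 * #((distinctTriples ι).image (intermod ψ)) ≤ #(distinctTriples ι) :=
  two_mul_card_image_le_of_fixedPointFree (fun t => (t.2.2, t.2.1, t.1))
    (fun t ht => by simp_all [distinctTriples, eq_comm])
    (fun t ht h => (mem_filter.mp ht).2.1 (congrArg Prod.fst h).symm)
    (fun t _ => by simp only [intermod]; abel)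

theorem ncard_range_intermod_le (ψ : ι → G) :
    (Set.range (intermod ψ)).ncard ≤
      (Fintype.card ι ^ 3 - Fintype.card ι ^ 2 + 2 * Fintype.card ι) / 2 := by
  classical
  have hdistinct := two_mul_card_image_intermod_distinctTriples_le ψ
  rw [card_distinctTriples] at hdistinct
  set K := Fintype.card ι
  have hcard :
      #(univ.image (intermod ψ)) ≤ K * K + #((distinctTriples ι).image (intermod ψ)) :=
    calc #(univ.image (intermod ψ))
        ≤ #((univ : Finset (ι × ι)).image (fun x => intermod ψ (x.1, x.2, x.1))) +
            #((distinctTriples ι).image (intermod ψ)) :=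
          (card_le_card (image_intermod_subset ψ)).trans (card_union_le _ _)
      _ ≤ K * K + _ := by
          gcongr
          exact card_image_le.trans (by simp [K])
  rw [← Set.image_univ, ← coe_univ, ← coe_image, Set.ncard_coe_finset,
    Nat.le_div_iff_mul_le two_pos, ← Nat.mul_self_sub_mul_sub_two_add_two_mul_mul_self]
  omega

end

/-- Counting third-order distortion directions: the image of
`(p,q,v) ↦ ψ(p) − ψ(q) + ψ(v)` over `(Fin K)³` has at most `(K³ − K² + 2K)/2` elements. -/
theorem third_order_image_card_le (K : ℕ) (ψ : Fin K → (Fin 3 → ℝ)) :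
    (Set.range fun t : Fin K × Fin K × Fin K => ψ t.1 - ψ t.2.1 + ψ t.2.2).ncard ≤
      (K ^ 3 - K ^ 2 + 2 * K) / 2 := by
  have h := ncard_range_intermod_le ψ
  rwa [Fintype.card_fin] at h
end
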